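/- Under the embedding of R = ℤ_(p) C_p into S ⊕ T = ℤ_(p) ⊕ ℤ_(p)[ζ_p] given by x ↦ (x·e₁, x·e_ζ), the image of R equals the set of pairs (x, y) with x ≡ y modulo the maximal ideals, i.e. x + pℤ_(p) = y + πℤ_(p)[ζ_p] under the natural identifications ℤ_(p)/(p) ≅ 𝔽_p ≅ ℤ_(p)[ζ_p]/(π), where π = 1 - ζ_p. -/

import Mathlib

open scoped BigOperators

def Zsub (p : ℕ) [Fact p.Prime] : Subring ℚ where
  carrier := {x : ℚ | ¬ (p ∣ x.den)}
  zero_mem' := by simp [Nat.Prime.ne_one (Fact.out (p := p.Prime))]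
  one_mem' := by simp [Nat.Prime.ne_one (Fact.out (p := p.Prime))]
  add_mem' := by
    intro a b ha hb hd
    rcases (Nat.Prime.dvd_mul (Fact.out (p := p.Prime))).1
      (hd.trans (Rat.add_den_dvd a b)) with h | h
    exacts [ha h, hb h]
  mul_mem' := by
    intro a b ha hb hd
    rcases (Nat.Prime.dvd_mul (Fact.out (p := p.Prime))).1
      (hd.trans (Rat.mul_den_dvd a b)) with h | h
    exacts [ha h, hb h]
  neg_mem' := by intro a ha; simpa using ha

abbrev Cp (p : ℕ) := Multiplicative (ZMod p)

def sigmaGen (p : ℕ) : Cp p := Multiplicative.ofAdd (1 : ZMod p)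

/-- The group ring `R = ℤ_(p) C_p`. -/
abbrev Rgrp (p : ℕ) [Fact p.Prime] := MonoidAlgebra (Zsub p) (Cp p)

/-- The ring `T = ℤ_(p)[ζ_p]`, realized by adjoining a root of the `p`-th
cyclotomic polynomial to `ℤ_(p)`. -/
abbrev Tring (p : ℕ) [Fact p.Prime] := AdjoinRoot (Polynomial.cyclotomic p (Zsub p))

/-- `ζ_p` as an element of `T`. -/
noncomputable def zetaT (p : ℕ) [Fact p.Prime] : Tring p :=
  AdjoinRoot.root (Polynomial.cyclotomic p (Zsub p))

/-!
The pairs `(x, y)` with `x ≡ y ≡ z` for a common integer `z` form a subring of `S × T`. It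
contains the image of `ℤ_(p)` (every element of `ℤ_(p)` is an integer modulo `p`, and `π ∣ p`)
and `φ σ = (1, ζ)`, hence all of `φ R`. Conversely, `φ (∑ σ^k) = (p, 0)`, `φ (1 - σ) = (0, π)`
and the second component of `φ` is onto `T = ℤ_(p)[ζ]`, so `(z + p s, z + π t)` is hit by
`z + s ∑ σ^k + x (1 - σ)` with `(φ x).2 = t`.
-/

open Polynomial

section IntCongr

variable {A B : Type*} [CommRing A] [CommRing B]

def intCongrSubring (I : Ideal A) (J : Ideal B) : Subring (A × B) where
  carrier := {q | ∃ z : ℤ, q.1 - z ∈ I ∧ q.2 - z ∈ J}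
  zero_mem' := ⟨0, by simp, by simp⟩
  one_mem' := ⟨1, by simp, by simp⟩
  add_mem' := by
    rintro q q' ⟨z, hz₁, hz₂⟩ ⟨z', hz'₁, hz'₂⟩
    refine ⟨z + z', ?_, ?_⟩
    · simpa [add_sub_add_comm] using add_mem hz₁ hz'₁
    · simpa [add_sub_add_comm] using add_mem hz₂ hz'₂
  neg_mem' := by
    rintro q ⟨z, hz₁, hz₂⟩
    refine ⟨-z, ?_, ?_⟩
    · simpa [neg_add_eq_sub] using neg_mem hz₁
    · simpa [neg_add_eq_sub] using neg_mem hz₂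
  mul_mem' := by
    rintro q q' ⟨z, hz₁, hz₂⟩ ⟨z', hz'₁, hz'₂⟩
    refine ⟨z * z', ?_, ?_⟩
    · convert add_mem (I.mul_mem_right q'.1 hz₁) (I.mul_mem_left z hz'₁) using 1
      simp only [Prod.fst_mul, Int.cast_mul]; ring
    · convert add_mem (J.mul_mem_right q'.2 hz₂) (J.mul_mem_left z hz'₂) using 1
      simp only [Prod.snd_mul, Int.cast_mul]; ring

theorem mem_intCongrSubring {I : Ideal A} {J : Ideal B} {q : A × B} :
    q ∈ intCongrSubring I J ↔ ∃ z : ℤ, q.1 - z ∈ I ∧ q.2 - z ∈ J :=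
  Iff.rfl

end IntCongr

theorem AdjoinRoot.surjective_of_apply_eq_root {R A : Type*} [CommRing R] [Semiring A]
    [Algebra R A] {f : R[X]} (ψ : A →ₐ[R] AdjoinRoot f) {a : A} (ha : ψ a = root f) :
    Function.Surjective ψ := by
  intro y
  induction y using AdjoinRoot.induction_on with
  | ih g => exact ⟨aeval a g, by rw [← aeval_algHom_apply, ha, AdjoinRoot.aeval_eq]⟩

section LocalCyclotomic

variable {p : ℕ} [Fact p.Prime]

theorem Zsub.exists_int_sub_mem_span (a : Zsub p) :
    ∃ z : ℤ, a - z ∈ Ideal.span {(p : Zsub p)} := by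
  obtain ⟨r, hr⟩ := a
  have hcop : IsCoprime (r.den : ℤ) p := Nat.isCoprime_iff_coprime.2
    ((Nat.coprime_comm).1 (((Fact.out : p.Prime).coprime_iff_not_dvd).2 hr))
  obtain ⟨b, m, hbm⟩ := hcop
  -- `r = r (b d + m p) = b n + m p r` for `r = n / d`.
  refine ⟨r.num * b, Ideal.mem_span_singleton'.2 ⟨m * ⟨r, hr⟩, Subtype.ext ?_⟩⟩
  have hnum : r * r.den = r.num := Rat.mul_den_eq_num r
  have hbm' : (b : ℚ) * r.den + m * p = 1 := by exact_mod_cast hbm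
  push_cast
  linear_combination r * hbm' - b * hnum

theorem geom_sum_zetaT : ∑ i ∈ Finset.range p, zetaT p ^ i = 0 := by
  have h : aeval (zetaT p) (∑ i ∈ Finset.range p, X ^ i : (Zsub p)[X]) = 0 := by
    rw [← cyclotomic_prime, zetaT, AdjoinRoot.aeval_eq, AdjoinRoot.mk_self]
  simpa using h

theorem one_sub_zetaT_dvd_natCast : 1 - zetaT p ∣ (p : Tring p) := by
  have : (p : Tring p) = ∑ i ∈ Finset.range p, (1 - zetaT p ^ i) := by
    simp [Finset.sum_sub_distrib, geom_sum_zetaT]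
  rw [this]
  exact Finset.dvd_sum fun i _ => one_sub_dvd_one_sub_pow _ i

theorem algebraMap_mem_intCongrSubring (r : Zsub p) :
    algebraMap (Zsub p) (Zsub p × Tring p) r ∈
      intCongrSubring (Ideal.span {(p : Zsub p)}) (Ideal.span {1 - zetaT p}) := by
  obtain ⟨z, hz⟩ := Zsub.exists_int_sub_mem_span r
  obtain ⟨s, hs⟩ := Ideal.mem_span_singleton'.1 hz
  refine ⟨z, hz, Ideal.mem_span_singleton.2 ?_⟩
  have : algebraMap (Zsub p) (Tring p) r - z = algebraMap (Zsub p) (Tring p) (s * p) := by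
    rw [hs, map_sub, map_intCast]
  rw [Prod.snd, Prod.algebraMap_apply, this, map_mul, map_natCast]
  exact one_sub_zetaT_dvd_natCast.mul_left _

theorem sigmaGen_pow_val (g : Cp p) : sigmaGen p ^ (Multiplicative.toAdd g).val = g := by
  rw [sigmaGen, ← ofAdd_nsmul, nsmul_one, ZMod.natCast_zmod_val, ofAdd_toAdd]

variable (φ : Rgrp p →ₐ[Zsub p] (Zsub p) × Tring p)
  (hφ : φ (MonoidAlgebra.of (Zsub p) (Cp p) (sigmaGen p)) = (1, zetaT p))
include hφ

theorem apply_mem_intCongrSubring (x : Rgrp p) :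
    φ x ∈ intCongrSubring (Ideal.span {(p : Zsub p)}) (Ideal.span {1 - zetaT p}) := by
  induction x using MonoidAlgebra.induction_on with
  | of g =>
    rw [← sigmaGen_pow_val g, map_pow, map_pow, hφ]
    refine pow_mem (mem_intCongrSubring.2 ⟨1, by simp, ?_⟩) _
    exact Ideal.mem_span_singleton'.2 ⟨-1, by simp⟩
  | add x y hx hy => simpa using add_mem hx hy
  | smul r x hx =>
    rw [map_smul, Algebra.smul_def]
    exact mul_mem (algebraMap_mem_intCongrSubring r) hx

theorem mem_range_of_mem_intCongrSubring {q : Zsub p × Tring p}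
    (hq : q ∈ intCongrSubring (Ideal.span {(p : Zsub p)}) (Ideal.span {1 - zetaT p})) :
    q ∈ Set.range φ := by
  set σ := MonoidAlgebra.of (Zsub p) (Cp p) (sigmaGen p)
  obtain ⟨z, h₁, h₂⟩ := hq
  obtain ⟨s, hs⟩ := Ideal.mem_span_singleton'.1 h₁
  obtain ⟨t, ht⟩ := Ideal.mem_span_singleton'.1 h₂
  obtain ⟨x, hx⟩ := AdjoinRoot.surjective_of_apply_eq_root ((AlgHom.snd _ _ _).comp φ)
    (a := σ) (by simp [hφ, zetaT]) t
  have hN : φ (∑ k ∈ Finset.range p, σ ^ k) = ((p : Zsub p), 0) := by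
    ext <;> simp [map_sum, hφ, Prod.fst_sum, Prod.snd_sum, geom_sum_zetaT]
  have hπ : φ (1 - σ) = (0, 1 - zetaT p) := by
    ext <;> simp [hφ]
  refine ⟨z + s • ∑ k ∈ Finset.range p, σ ^ k + x * (1 - σ), ?_⟩
  rw [map_add, map_add, map_intCast, map_smul, map_mul, hN, hπ]
  refine Prod.ext ?_ ?_
  · change (z : Zsub p) + s * p + (φ x).1 * 0 = q.1
    linear_combination hs
  · change (z : Tring p) + s • 0 + (φ x).2 * (1 - zetaT p) = q.2
    rw [show (φ x).2 = t from hx, smul_zero]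
    linear_combination ht

end LocalCyclotomic

/-- Under the embedding of `R = ℤ_(p) C_p` into `S ⊕ T = ℤ_(p) ⊕ ℤ_(p)[ζ_p]`
(the `ℤ_(p)`-algebra map sending `σ` to `(1, ζ_p)`, i.e. `x ↦ (x·e₁, x·e_ζ)`),
the image of `R` is exactly the set of pairs `(x, y)` that are congruent modulo
the maximal ideals `(p)` of `S` and `(π) = (1 - ζ_p)` of `T`, i.e. pairs whose
residues agree in `ℤ_(p)/(p) ≅ 𝔽_p ≅ ℤ_(p)[ζ_p]/(π)` (equivalently, both
residues are represented by a common integer `z`). -/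
theorem stmt2 (p : ℕ) [Fact p.Prime]
    (φ : Rgrp p →ₐ[Zsub p] (Zsub p) × Tring p)
    (hφ : φ (MonoidAlgebra.of (Zsub p) (Cp p) (sigmaGen p)) = (1, zetaT p)) :
    ∀ q : (Zsub p) × Tring p,
      q ∈ Set.range φ ↔
        ∃ z : ℤ, q.1 - (z : Zsub p) ∈ Ideal.span {(p : Zsub p)} ∧
          q.2 - (z : Tring p) ∈ Ideal.span {1 - zetaT p} := by
  intro q
  rw [← mem_intCongrSubring]
  constructor
  · rintro ⟨x, rfl⟩
    exact apply_mem_intCongrSubring φ hφ x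
  · exact mem_range_of_mem_intCongrSubring φ hφ
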